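/- arXiv:2307.08940 — 2 statements merged into one kernel-verified Lean document; each statement's English description precedes it below -/
import Mathlib

section
/- Let p be a prime and r an integer. The p-adic polygamma function satisfies: ψ_p^{(r)}(0) = ψ_p^{(r)}(1) = 0; ψ_p^{(r)}(z) = (−1)^r · ψ_p^{(r)}(1−z) for all z ∈ ℤ_p; and ψ_p^{(r)}(z+1) − ψ_p^{(r)}(z) = 1/z^{r+1} if z ∈ ℤ_p^×, while ψ_p^{(r)}(z+1) − ψ_p^{(r)}(z) = 0 if z ∈ pℤ_p. -/
/-!
Let `τ(z) = z^{-(r+1)}` on `ℤ_p^×` and `τ(z) = 0` on `pℤ_p`. Since `‖a^n - b^n‖ ≤ ‖a - b‖` for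
units `a, b`, `τ` is continuous, so `ψ(z+1) - ψ(z) = τ(z)` follows by density from its case
`z ∈ ℕ`, where it is immediate.

For `ψ(0) = 0` let `S(N) = ∑_{k<N} τ(k)`. If `p ∣ N` then `τ` is `N`-periodic modulo `N`, so
`S(N j) ≡ j S(N) mod N`; taking `N = p^{M+1}` and `j = p` gives `‖S(p^{M+1})‖ ≤ p^{-M}` by
induction, and `ψ(0) = lim ψ(p^{M+1}) = 0`.

Finally `τ(-z) = (-1)^{r+1} τ(z)` makes `ψ(z) - (-1)^r ψ(1-z)` invariant under `z ↦ z + 1`, so it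
is constant on `ℤ_p`, equal to `ψ(0) - (-1)^r ψ(1) = 0`.
-/

open Filter Finset Topology

section Ultrametric

variable {K : Type*} [NormedField K] [IsUltrametricDist K]

theorem norm_pow_sub_pow_le {a b : K} (ha : ‖a‖ ≤ 1) (hb : ‖b‖ ≤ 1) (n : ℕ) :
    ‖a ^ n - b ^ n‖ ≤ ‖a - b‖ := by
  induction n with
  | zero => simp
  | succ n ih =>
    rw [show a ^ (n + 1) - b ^ (n + 1) = a ^ n * (a - b) + (a ^ n - b ^ n) * b by ring]
    refine (IsUltrametricDist.norm_add_le_max _ _).trans (max_le ?_ ?_) <;> rw [norm_mul]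
    · rw [norm_pow]
      exact mul_le_of_le_one_left (norm_nonneg _) (pow_le_one₀ (norm_nonneg _) ha)
    · exact (mul_le_of_le_one_right (norm_nonneg _) hb).trans ih

theorem norm_zpow_sub_zpow_le {a b : K} (ha : ‖a‖ = 1) (hb : ‖b‖ = 1) (n : ℤ) :
    ‖a ^ n - b ^ n‖ ≤ ‖a - b‖ := by
  have ha₀ : a ≠ 0 := norm_ne_zero_iff.mp (by simp [ha])
  have hb₀ : b ≠ 0 := norm_ne_zero_iff.mp (by simp [hb])
  obtain ⟨n, rfl | rfl⟩ := n.eq_nat_or_neg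
  · simpa using norm_pow_sub_pow_le ha.le hb.le n
  · have hinv : ‖a⁻¹ - b⁻¹‖ = ‖a - b‖ := by
      rw [inv_sub_inv ha₀ hb₀, norm_div, norm_mul, ha, hb, one_mul, div_one, norm_sub_rev]
    simpa [inv_pow, hinv] using
      norm_pow_sub_pow_le (a := a⁻¹) (b := b⁻¹) (by simp [ha]) (by simp [hb]) n

end Ultrametric

namespace PadicInt

variable {p : ℕ} [Fact p.Prime]

theorem ext_natCast {X : Type*} [TopologicalSpace X] [T2Space X] {f g : ℤ_[p] → X}
    (hf : Continuous f) (hg : Continuous g) (h : ∀ n : ℕ, f n = g n) : f = g :=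
  denseRange_natCast.equalizer hf hg (funext h)

theorem eq_apply_zero_of_add_one {X : Type*} [TopologicalSpace X] [T2Space X] {f : ℤ_[p] → X}
    (hf : Continuous f) (h : ∀ z, f (z + 1) = f z) (z : ℤ_[p]) : f z = f 0 := by
  refine congr_fun (ext_natCast hf continuous_const fun n => ?_) z
  induction n with
  | zero => simp
  | succ n ih => rw [Nat.cast_succ, h, ih]

end PadicInt

namespace PadicPolygamma

open Classical in
noncomputable def term (p : ℕ) [Fact p.Prime] (r : ℤ) (z : ℤ_[p]) : ℚ_[p] :=
  if (p : ℤ_[p]) ∣ z then 0 else ((z : ℚ_[p]) ^ (r + 1))⁻¹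

noncomputable def partialSum (p : ℕ) [Fact p.Prime] (r : ℤ) (n : ℕ) : ℚ_[p] :=
  ∑ k ∈ range n, term p r k

variable {p : ℕ} [Fact p.Prime] {r : ℤ}

theorem term_of_dvd {z : ℤ_[p]} (hz : (p : ℤ_[p]) ∣ z) : term p r z = 0 := by
  simp [term, hz]

theorem term_of_not_dvd {z : ℤ_[p]} (hz : ¬(p : ℤ_[p]) ∣ z) :
    term p r z = ((z : ℚ_[p]) ^ (r + 1))⁻¹ := by
  simp [term, hz]

theorem term_of_isUnit {z : ℤ_[p]} (hz : IsUnit z) : term p r z = ((z : ℚ_[p]) ^ (r + 1))⁻¹ :=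
  term_of_not_dvd fun hdvd =>
    PadicInt.not_isUnit_iff.mpr ((PadicInt.norm_lt_one_iff_dvd z).mpr hdvd) hz

theorem term_natCast (k : ℕ) :
    term p r k = if p ∣ k then 0 else ((k : ℚ_[p]) ^ (r + 1))⁻¹ := by
  simp [term, ← PadicInt.norm_lt_one_iff_dvd]

theorem term_neg (z : ℤ_[p]) : term p r (-z) = (-1) ^ (r + 1) * term p r z := by
  by_cases hz : (p : ℤ_[p]) ∣ z
  · rw [term_of_dvd hz, term_of_dvd ((dvd_neg).mpr hz), mul_zero]
  · rw [term_of_not_dvd hz, term_of_not_dvd (mt dvd_neg.mp hz), PadicInt.coe_neg,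
      neg_eq_neg_one_mul (z : ℚ_[p]), mul_zpow, mul_inv, ← inv_zpow, inv_neg_one]

theorem norm_coe_eq_one_of_not_dvd {z : ℤ_[p]} (hz : ¬(p : ℤ_[p]) ∣ z) :
    ‖(z : ℚ_[p])‖ = 1 := by
  rw [PadicInt.padic_norm_e_of_padicInt, ← PadicInt.isUnit_iff, ← not_not (a := IsUnit z),
    PadicInt.not_isUnit_iff, PadicInt.norm_lt_one_iff_dvd]
  exact hz

theorem norm_term_le_one (z : ℤ_[p]) : ‖term p r z‖ ≤ 1 := by
  by_cases hz : (p : ℤ_[p]) ∣ z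
  · simp [term_of_dvd hz]
  · simp [term_of_not_dvd hz, norm_coe_eq_one_of_not_dvd hz]

theorem norm_term_sub_le {z w : ℤ_[p]} (h : ‖z - w‖ < 1) :
    ‖term p r z - term p r w‖ ≤ ‖z - w‖ := by
  have hdvd : (p : ℤ_[p]) ∣ z ↔ (p : ℤ_[p]) ∣ w := by
    rw [← dvd_sub_left ((PadicInt.norm_lt_one_iff_dvd _).mp h), sub_sub_cancel]
  by_cases hw : (p : ℤ_[p]) ∣ w
  · simp [term_of_dvd hw, term_of_dvd (hdvd.mpr hw)]
  have hz := mt hdvd.mp hw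
  rw [term_of_not_dvd hz, term_of_not_dvd hw, ← zpow_neg, ← zpow_neg,
    ← PadicInt.padic_norm_e_of_padicInt, PadicInt.coe_sub]
  exact norm_zpow_sub_zpow_le (norm_coe_eq_one_of_not_dvd hz) (norm_coe_eq_one_of_not_dvd hw) _

theorem continuous_term : Continuous (term p r) := by
  refine Metric.continuous_iff.mpr fun z ε hε => ⟨min ε 1, by positivity, fun w hw => ?_⟩
  rw [dist_eq_norm] at hw ⊢
  exact (norm_term_sub_le (hw.trans_le (min_le_right _ _))).trans_lt
    (hw.trans_le (min_le_left _ _))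

theorem partialSum_eq_sum_Ico (n : ℕ) :
    partialSum p r n = ∑ k ∈ Ico 1 n, if p ∣ k then 0 else ((k : ℚ_[p]) ^ (r + 1))⁻¹ := by
  rcases n.eq_zero_or_pos with rfl | hn
  · simp [partialSum]
  · rw [partialSum, range_eq_Ico, sum_eq_sum_Ico_succ_bot hn]
    simp [term_natCast, term_of_dvd (dvd_zero _)]

theorem norm_partialSum_mul_sub_le {N : ℕ} (hN : p ∣ N) (j : ℕ) :
    ‖partialSum p r (N * j) - j * partialSum p r N‖ ≤ ‖(N : ℤ_[p])‖ := by
  induction j with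
  | zero => simp [partialSum]
  | succ j ih =>
    have hblock : ∀ k ∈ range N, ‖term p r ↑(N * j + k) - term p r k‖ ≤ ‖(N : ℤ_[p])‖ := by
      intro k _
      have hdiff : ((N * j + k : ℕ) : ℤ_[p]) - k = N * j := by push_cast; ring
      have hsmall : ‖(N : ℤ_[p]) * j‖ ≤ ‖(N : ℤ_[p])‖ := by
        rw [norm_mul]; exact mul_le_of_le_one_right (norm_nonneg _) (PadicInt.norm_le_one _)
      have hlt : ‖(N : ℤ_[p])‖ < 1 := PadicInt.norm_natCast_lt_one_iff.mpr hN
      exact (norm_term_sub_le (hdiff ▸ hsmall.trans_lt hlt)).trans (hdiff ▸ hsmall)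
    have hsplit : partialSum p r (N * (j + 1)) - (j + 1 : ℕ) * partialSum p r N =
        (partialSum p r (N * j) - j * partialSum p r N) +
          ∑ k ∈ range N, (term p r ↑(N * j + k) - term p r k) := by
      simp only [partialSum, mul_add_one, sum_range_add, sum_sub_distrib]
      push_cast
      ring
    rw [hsplit]
    exact (IsUltrametricDist.norm_add_le_max _ _).trans (max_le ih
      (IsUltrametricDist.norm_sum_le_of_forall_le_of_nonneg (norm_nonneg _) hblock))

theorem norm_partialSum_pow_succ_le (M : ℕ) :
    ‖partialSum p r (p ^ (M + 1))‖ ≤ ‖(p : ℤ_[p])‖ ^ M := by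
  induction M with
  | zero =>
    rw [zero_add, pow_one, pow_zero]
    exact IsUltrametricDist.norm_sum_le_of_forall_le_of_nonneg zero_le_one
      fun k _ => norm_term_le_one _
  | succ M ih =>
    have hstep := norm_partialSum_mul_sub_le (r := r) (dvd_pow_self p M.succ_ne_zero) p
    rw [← pow_succ] at hstep
    calc ‖partialSum p r (p ^ (M + 2))‖
        = ‖(partialSum p r (p ^ (M + 2)) - p * partialSum p r (p ^ (M + 1))) +
            p * partialSum p r (p ^ (M + 1))‖ := by rw [sub_add_cancel]
      _ ≤ ‖(p : ℤ_[p])‖ ^ (M + 1) := by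
        refine (IsUltrametricDist.norm_add_le_max _ _).trans (max_le ?_ ?_)
        · simpa using hstep
        · rw [norm_mul, pow_succ' ‖(p : ℤ_[p])‖]
          exact mul_le_mul_of_nonneg_left ih (norm_nonneg (p : ℚ_[p]))

theorem tendsto_partialSum_pow_succ :
    Tendsto (fun M => partialSum p r (p ^ (M + 1))) atTop (𝓝 0) :=
  squeeze_zero_norm norm_partialSum_pow_succ_le
    (tendsto_pow_atTop_nhds_zero_of_lt_one (norm_nonneg (p : ℤ_[p])) Padic.norm_p_lt_one)

end PadicPolygamma

open PadicPolygamma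

structure IsPadicPolygamma (p : ℕ) [Fact p.Prime] (r : ℤ) (ψ : ℤ_[p] → ℚ_[p]) : Prop where
  continuous : Continuous ψ
  natCast_eq : ∀ n : ℕ, 0 < n → ψ n = partialSum p r n

namespace IsPadicPolygamma

variable {p : ℕ} [Fact p.Prime] {r : ℤ} {ψ : ℤ_[p] → ℚ_[p]}

theorem map_zero (hψ : IsPadicPolygamma p r ψ) : ψ 0 = 0 := by
  have hpow : Tendsto (fun M => ((p ^ (M + 1) : ℕ) : ℤ_[p])) atTop (𝓝 0) := by
    push_cast
    exact (tendsto_pow_atTop_nhds_zero_of_norm_lt_one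
      ((PadicInt.norm_lt_one_iff_dvd (p : ℤ_[p])).mpr dvd_rfl)).comp (tendsto_add_atTop_nat 1)
  refine tendsto_nhds_unique ((hψ.continuous.tendsto 0).comp hpow) ?_
  exact tendsto_partialSum_pow_succ.congr fun M =>
    (hψ.natCast_eq _ (pow_pos (Fact.out : p.Prime).pos _)).symm

theorem natCast_eq_partialSum (hψ : IsPadicPolygamma p r ψ) (n : ℕ) :
    ψ n = partialSum p r n := by
  rcases n.eq_zero_or_pos with rfl | hn
  · simpa [partialSum] using hψ.map_zero
  · exact hψ.natCast_eq n hn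

theorem add_one_sub (hψ : IsPadicPolygamma p r ψ) (z : ℤ_[p]) :
    ψ (z + 1) - ψ z = term p r z := by
  refine congr_fun (PadicInt.ext_natCast (f := fun z => ψ (z + 1) - ψ z)
    (by have := hψ.continuous; fun_prop) continuous_term fun n => ?_) z
  simp only [← Nat.cast_succ, hψ.natCast_eq_partialSum, partialSum, sum_range_succ,
    add_sub_cancel_left]

theorem map_one (hψ : IsPadicPolygamma p r ψ) : ψ 1 = 0 := by
  simpa [hψ.map_zero, term_of_dvd (dvd_zero _)] using hψ.add_one_sub 0

theorem reflection (hψ : IsPadicPolygamma p r ψ) (z : ℤ_[p]) :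
    ψ z = (-1) ^ r * ψ (1 - z) := by
  have hsign : (-1 : ℚ_[p]) ^ r * (-1) ^ (r + 1) = -1 := by
    rw [zpow_add_one₀ (by norm_num), ← mul_assoc, ← mul_zpow, neg_one_mul, neg_neg, one_zpow,
      one_mul]
  have hperiodic : ∀ z, ψ (z + 1) - (-1) ^ r * ψ (1 - (z + 1)) = ψ z - (-1) ^ r * ψ (1 - z) := by
    intro z
    have hz := hψ.add_one_sub z
    have hneg := hψ.add_one_sub (-z)
    rw [term_neg] at hneg
    rw [show 1 - (z + 1) = -z by ring, show 1 - z = -z + 1 by ring]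
    linear_combination hz + (-1) ^ r * hneg + term p r z * hsign
  have h := PadicInt.eq_apply_zero_of_add_one (f := fun z => ψ z - (-1) ^ r * ψ (1 - z))
    (by have := hψ.continuous; fun_prop) hperiodic z
  rw [sub_zero, hψ.map_zero, hψ.map_one, mul_zero, sub_zero] at h
  exact sub_eq_zero.mp h

end IsPadicPolygamma

/-- **Basic properties of the p-adic polygamma function** `ψ = ψ_p^{(r)}`:
`ψ(0) = ψ(1) = 0`, the reflection formula `ψ(z) = (-1)^r ψ(1-z)`, and the
difference equation `ψ(z+1) - ψ(z) = z^{-(r+1)}` for `z ∈ ℤ_p^×`, `= 0` for `z ∈ pℤ_p`. -/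
theorem stmt_1 (p : ℕ) [Fact p.Prime] (r : ℤ) (ψ : ℤ_[p] → ℚ_[p])
    (hψc : Continuous ψ)
    (hψ : ∀ n : ℕ, 0 < n →
      ψ (n : ℤ_[p]) = ∑ k ∈ Finset.Ico 1 n, if p ∣ k then 0 else ((k : ℚ_[p]) ^ (r + 1))⁻¹) :
    ψ 0 = 0 ∧ ψ 1 = 0 ∧
      (∀ z : ℤ_[p], ψ z = (-1 : ℚ_[p]) ^ r * ψ (1 - z)) ∧
      (∀ z : ℤ_[p], IsUnit z → ψ (z + 1) - ψ z = ((z : ℚ_[p]) ^ (r + 1))⁻¹) ∧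
      (∀ z : ℤ_[p], (p : ℤ_[p]) ∣ z → ψ (z + 1) - ψ z = 0) := by
  have h : IsPadicPolygamma p r ψ :=
    ⟨hψc, fun n hn => (hψ n hn).trans (partialSum_eq_sum_Ico n).symm⟩
  refine ⟨h.map_zero, h.map_one, h.reflection, fun z hz => ?_, fun z hz => ?_⟩
  · rw [h.add_one_sub, term_of_isUnit hz]
  · rw [h.add_one_sub, term_of_dvd hz]
end

section
/- Let p be a prime and let a = (a_1,…,a_n), b = (b_1,…,b_n) ∈ ℤ_(p)^n satisfy the Hypothesis, and suppose in addition that b_k ≡ 1 (mod p) and b_l ≡ 1 (mod p) for two indices k, l, that is, b_k − 1 ∈ pℤ_p and b_l − 1 ∈ pℤ_p. Put ε_k = b_k − 1 and ε_l = b_l − 1. Then γ_l ≠ 0 and γ_k / γ_l = ∏_{i=1}^n [ Γ_p(b_i − ε_k) / Γ_p(a_i − ε_k) ] · [ Γ_p(a_i − ε_l) / Γ_p(b_i − ε_l) ]. -/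
open Finset

noncomputable section

/-- `α'` is the Dwork prime `α^{(1)}` of `α`: `α' = (α + T)/p` where `0 ≤ T < p`
and `α + T ≡ 0 (mod p)` (i.e. `(α + T)/p` has p-adic norm at most `1`). -/
def IsDworkPrime (p : ℕ) [Fact p.Prime] (α α' : ℚ) : Prop :=
  ∃ T : ℕ, T < p ∧ ‖(((α + T) / p : ℚ) : ℚ_[p])‖ ≤ 1 ∧ α' = (α + T) / p

/-- `(x)₊ = x` if `x > 0` and `1` otherwise. -/
def rplus (x : ℚ) : ℚ := if 0 < x then x else 1

/-- `K(x) = ∏ᵢ (aᵢ - x)₊ / (bᵢ - x)₊`. -/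
def Kfun {n : ℕ} (a b : Fin n → ℚ) (x : ℚ) : ℚ :=
  ∏ i, rplus (a i - x) / rplus (b i - x)

/-- `Z(x) = #{i : aᵢ < x} - #{j : bⱼ < x}`. -/
def Zfun {n : ℕ} (a b : Fin n → ℚ) (x : ℚ) : ℤ :=
  ((univ.filter fun i => a i < x).card : ℤ) - ((univ.filter fun j => b j < x).card : ℤ)

/-- The constant `γ_k` of Kedlaya's residue formula. -/
def gammaConst (p : ℕ) [Fact p.Prime] {n : ℕ} (Γ : ℚ_[p] → ℚ_[p])
    (a b a1 b1 : Fin n → ℚ) (k : Fin n) : ℚ_[p] :=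
  (-1 : ℚ_[p]) ^ Zfun a b (b k) * (p : ℚ_[p]) ^ (-Zfun a1 b1 (b1 k)) *
      ((Kfun a1 b1 (b1 k) : ℚ) : ℚ_[p]) / ((Kfun a b (b k) : ℚ) : ℚ_[p]) *
    ∏ i, Γ ((Int.fract (b i - b k) : ℚ) : ℚ_[p]) / Γ ((Int.fract (a i - b k) : ℚ) : ℚ_[p])

/-!
Since `b_k ≡ 1 (mod p)`, its Dwork prime is `(b_k + p - 1)/p`. For `α ∈ (0, 1)` the functional
equation (`Γ_p(x + 1) = -Γ_p(x)` if `p ∣ x`, `-x Γ_p(x)` otherwise) turns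
`Γ_p(α - ε_k) = Γ_p(α - b_k + 1)` into `Γ_p({α - b_k})` times a sign (`+1` iff `α < b_k`), times
`1/p` exactly when `α^{(1)} > b_k^{(1)}`, times `(α - b_k)₊ / (α^{(1)} - b_k^{(1)})₊`. Taken over
`α = b_i` against `α = a_i`, these factors multiply to
`(-1)^{Z(b_k)} p^{1 - Z^{(F)}(b_k^{(1)})} K^{(F)}(b_k^{(1)}) / K(b_k)`, so
`∏ᵢ Γ_p(b_i - ε_k) / Γ_p(a_i - ε_k) = p γ_k`, and the quotient for `k` and `l` follows.
-/

theorem norm_sub_le_max_norm {E : Type*} [SeminormedAddCommGroup E] [IsUltrametricDist E]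
    (x y : E) : ‖x - y‖ ≤ max ‖x‖ ‖y‖ := by
  simpa [dist_eq_norm] using IsUltrametricDist.dist_triangle_max x 0 y

theorem norm_add_lt_iff_of_norm_lt {E : Type*} [SeminormedAddCommGroup E] [IsUltrametricDist E]
    {x y : E} {r : ℝ} (hx : ‖x‖ < r) : ‖x + y‖ < r ↔ ‖y‖ < r :=
  ⟨fun h => by simpa using (norm_sub_le_max_norm (x + y) x).trans_lt (max_lt h hx),
    fun h => (IsUltrametricDist.norm_add_le_max x y).trans_lt (max_lt hx h)⟩

theorem rplus_of_pos {x : ℚ} (h : 0 < x) : rplus x = x := if_pos h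

theorem rplus_of_nonpos {x : ℚ} (h : x ≤ 0) : rplus x = 1 := if_neg h.not_gt

theorem eq_of_sub_eq_intCast {x y : ℚ} (hx : 0 < x ∧ x < 1) (hy : 0 < y ∧ y < 1) {t : ℤ}
    (h : x - y = t) : x = y := by
  have h1 : t < 1 := by exact_mod_cast (by linarith : (t : ℚ) < 1)
  have h2 : -1 < t := by exact_mod_cast (by linarith : (-1 : ℚ) < t)
  rw [show t = 0 by omega, Int.cast_zero, sub_eq_zero] at h
  exact h

theorem card_filter_lt_add_card_filter_eq_add_card_filter_gt {ι α : Type*} [Fintype ι]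
    [LinearOrder α] (f : ι → α) (x : α) :
    #{i | f i < x} + #{i | f i = x} + #{i | x < f i} = Fintype.card ι := by
  simp only [card_filter, ← sum_add_distrib, Fintype.card_eq_sum_ones]
  refine sum_congr rfl fun i _ => ?_
  rcases lt_trichotomy (f i) x with h | h | h
  · simp [h, h.ne, h.not_gt]
  · simp [h]
  · simp [h, h.ne', h.not_gt]

section Products

variable {K : Type*} [Field K] {n : ℕ}

theorem prod_sign_div_eq_neg_one_zpow (a b : Fin n → ℚ) (x : ℚ) :
    ∏ i, (if b i < x then (1 : K) else -1) / (if a i < x then 1 else -1) = (-1) ^ Zfun a b x := by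
  have ha := card_filter_add_card_filter_not (s := univ) (fun i => a i < x)
  have hb := card_filter_add_card_filter_not (s := univ) (fun i => b i < x)
  rw [prod_div_distrib, prod_ite, prod_ite, prod_const_one, prod_const_one, prod_const, prod_const,
    one_mul, one_mul, ← zpow_natCast, ← zpow_natCast, ← zpow_sub₀ (by norm_num), Zfun]
  congr 1
  omega

theorem prod_ite_lt_div_eq_zpow (c : K) (hc : c ≠ 0) (a b : Fin n → ℚ)
    (hb : Function.Injective b) (k : Fin n) (ha : ∀ i, a i ≠ b k) :
    ∏ i, (if b k < b i then c⁻¹ else 1) / (if b k < a i then c⁻¹ else 1) =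
      c ^ (1 - Zfun a b (b k)) := by
  have hca := card_filter_lt_add_card_filter_eq_add_card_filter_gt a (b k)
  have hcb := card_filter_lt_add_card_filter_eq_add_card_filter_gt b (b k)
  rw [filter_false_of_mem fun i _ => ha i, card_empty] at hca
  rw [show ({i | b i = b k} : Finset (Fin n)) = {k} by ext; simp [hb.eq_iff], card_singleton] at hcb
  rw [prod_div_distrib, prod_ite, prod_ite, prod_const_one, prod_const_one, prod_const, prod_const,
    mul_one, mul_one, inv_pow, inv_pow, inv_div_inv, ← zpow_natCast, ← zpow_natCast,
    ← zpow_sub₀ hc, Zfun]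
  congr 1
  simp only [Fintype.card_fin] at hca hcb
  omega

theorem prod_rplus_div_eq_Kfun_div [CharZero K] (a b a1 b1 : Fin n → ℚ) (x x1 : ℚ) :
    ∏ i, ((rplus (b i - x) : ℚ) : K) / ((rplus (b1 i - x1) : ℚ) : K) /
        (((rplus (a i - x) : ℚ) : K) / ((rplus (a1 i - x1) : ℚ) : K)) =
      ((Kfun a1 b1 x1 : ℚ) : K) / ((Kfun a b x : ℚ) : K) := by
  rw [Kfun, Kfun, Rat.cast_prod, Rat.cast_prod, ← prod_div_distrib]
  refine prod_congr rfl fun i _ => ?_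
  push_cast
  simp only [div_eq_mul_inv, mul_inv, inv_inv]
  ring

end Products

section DworkPrime

variable {p : ℕ} [Fact p.Prime]

theorem norm_lt_one_of_norm_div_le_one {q : ℚ} (h : ‖((q / p : ℚ) : ℚ_[p])‖ ≤ 1) :
    ‖(q : ℚ_[p])‖ < 1 := by
  have hq : (q : ℚ_[p]) = p * ((q / p : ℚ) : ℚ_[p]) := by
    push_cast
    rw [mul_div_cancel₀ _ (Nat.cast_ne_zero.mpr (Fact.out : p.Prime).ne_zero)]
  rw [hq, norm_mul, Padic.norm_p]
  calc (p : ℝ)⁻¹ * _ ≤ (p : ℝ)⁻¹ * 1 := by gcongr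
    _ < 1 := by simpa using inv_lt_one_of_one_lt₀ (by exact_mod_cast (Fact.out : p.Prime).one_lt)

theorem IsDworkPrime.norm_le_one {α α1 : ℚ} (h : IsDworkPrime p α α1) :
    ‖(α : ℚ_[p])‖ ≤ 1 := by
  obtain ⟨T, -, hT, -⟩ := h
  have hα : (α : ℚ_[p]) = ((α + T : ℚ) : ℚ_[p]) - T := by push_cast; ring
  rw [hα]
  exact (norm_sub_le_max_norm _ _).trans (max_le (norm_lt_one_of_norm_div_le_one hT).le
    (IsUltrametricDist.norm_natCast_le_one ℚ_[p] T))

theorem norm_sub_lt_one_iff_add_one_eq {α β : ℚ} {T : ℕ} (hT : T < p)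
    (hαT : ‖((α + T : ℚ) : ℚ_[p])‖ < 1) (hβ : ‖((β - 1 : ℚ) : ℚ_[p])‖ < 1) :
    ‖((α - β : ℚ) : ℚ_[p])‖ < 1 ↔ T + 1 = p := by
  have hu : ‖((α + T : ℚ) : ℚ_[p]) - ((β - 1 : ℚ) : ℚ_[p])‖ < 1 :=
    (norm_sub_le_max_norm _ _).trans_lt (max_lt hαT hβ)
  have hαβ : ((α - β : ℚ) : ℚ_[p]) =
      ((α + T : ℚ) : ℚ_[p]) - ((β - 1 : ℚ) : ℚ_[p]) + -((T + 1 : ℕ) : ℚ_[p]) := by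
    push_cast; ring
  rw [hαβ, norm_add_lt_iff_of_norm_lt hu, norm_neg, Padic.norm_natCast_lt_one_iff]
  exact ⟨fun h => le_antisymm (by omega) (Nat.le_of_dvd T.succ_pos h), fun h => h ▸ dvd_rfl⟩

theorem IsDworkPrime.eq_of_norm_sub_one_lt_one {β β1 : ℚ} (h : IsDworkPrime p β β1)
    (hβ : ‖((β - 1 : ℚ) : ℚ_[p])‖ < 1) : β1 = (β + (p - 1)) / p := by
  obtain ⟨T, hT, hTn, rfl⟩ := h
  have hT1 := (norm_sub_lt_one_iff_add_one_eq hT (norm_lt_one_of_norm_div_le_one hTn) hβ).mp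
    (by simp)
  rw [← hT1]
  push_cast
  ring

theorem IsDworkPrime.exists_sub_eq_intCast {α β α1 β1 : ℚ} (hα : IsDworkPrime p α α1)
    (hβ : IsDworkPrime p β β1) (h : α1 = β1) : ∃ t : ℤ, α - β = t := by
  obtain ⟨S, -, -, rfl⟩ := hα
  obtain ⟨T, -, -, rfl⟩ := hβ
  refine ⟨(T : ℤ) - S, ?_⟩
  rw [div_left_inj' (Nat.cast_ne_zero.mpr (Fact.out : p.Prime).ne_zero)] at h
  push_cast
  linarith

end DworkPrime

section PadicGamma

variable {p : ℕ} [Fact p.Prime] {Γ : ℚ_[p] → ℚ_[p]}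
  (hΓc : ContinuousOn Γ {x | ‖x‖ ≤ 1})
  (hΓ : ∀ m : ℕ, 0 < m →
    Γ (m : ℚ_[p]) = (-1 : ℚ_[p]) ^ m *
      ∏ k ∈ Finset.Ico 1 m, if p ∣ k then 1 else (k : ℚ_[p]))

include hΓ in
theorem gamma_natCast_add_one {m : ℕ} (hm : 0 < m) :
    Γ ((m : ℚ_[p]) + 1) = -(if p ∣ m then 1 else (m : ℚ_[p])) * Γ m := by
  have h := hΓ (m + 1) m.succ_pos
  rw [Finset.prod_Ico_succ_top hm, pow_succ] at h
  push_cast at h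
  rw [h, hΓ m hm]
  ring

include hΓc hΓ

/-- Both sides are continuous on `ℤ_[p]` (the case distinction is along the clopen ball
`‖z‖ < 1`) and agree on the dense set of positive integers. -/
theorem gamma_padicInt_add_one (z : ℤ_[p]) :
    Γ ((z + 1 : ℤ_[p]) : ℚ_[p]) = -(if ‖z‖ < 1 then 1 else (z : ℚ_[p])) * Γ z := by
  have hG : Continuous fun z : ℤ_[p] => Γ z :=
    hΓc.comp_continuous continuous_subtype_val fun z => z.norm_le_one
  have hdense : DenseRange fun m : ℕ => ((m + 1 : ℕ) : ℤ_[p]) := by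
    have := (Homeomorph.addRight (1 : ℤ_[p])).surjective.denseRange.comp
      PadicInt.denseRange_natCast (continuous_add_const 1)
    simpa [Function.comp_def] using this
  have hfrontier : frontier {z : ℤ_[p] | ‖z‖ < 1} = ∅ := by
    simpa [Metric.ball, dist_eq_norm] using IsUltrametricDist.frontier_ball_eq_empty (0 : ℤ_[p]) 1
  refine congrFun (hdense.equalizer (hG.comp (continuous_add_const 1))
    (((Continuous.if (p := fun z : ℤ_[p] => ‖z‖ < 1) (by simp [hfrontier]) continuous_const
      continuous_subtype_val).neg).mul hG) (funext fun m => ?_)) z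
  have h := gamma_natCast_add_one hΓ m.succ_pos
  simp only [Function.comp_apply, Pi.mul_apply, Pi.neg_apply, PadicInt.norm_natCast_lt_one_iff,
    PadicInt.coe_add, PadicInt.coe_natCast, PadicInt.coe_one]
  exact h

theorem gamma_add_one {x : ℚ_[p]} (hx : ‖x‖ ≤ 1) :
    Γ (x + 1) = -(if ‖x‖ < 1 then 1 else x) * Γ x :=
  gamma_padicInt_add_one hΓc hΓ ⟨x, hx⟩

theorem gamma_sub_sub_one_eq_of_lt {α β : ℚ} {T : ℕ} (hT : T < p) (hβα : β < α)
    (hαβ1 : α - β < 1) (hαβ : ‖((α - β : ℚ) : ℚ_[p])‖ ≤ 1)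
    (hiff : ‖((α - β : ℚ) : ℚ_[p])‖ < 1 ↔ T + 1 = p) :
    Γ ((α - (β - 1) : ℚ) : ℚ_[p]) =
      -1 * (if (β + (p - 1)) / p < (α + T) / p then (p : ℚ_[p])⁻¹ else 1) *
        (((α - β : ℚ) : ℚ_[p]) /
          ((rplus ((α + T) / p - (β + (p - 1)) / p) : ℚ) : ℚ_[p])) *
        Γ ((α - β : ℚ) : ℚ_[p]) := by
  have hp : (0 : ℚ) < p := Nat.cast_pos.mpr (Fact.out : p.Prime).pos
  have harg : ((α - (β - 1) : ℚ) : ℚ_[p]) = ((α - β : ℚ) : ℚ_[p]) + 1 := by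
    push_cast; ring
  rw [harg, gamma_add_one hΓc hΓ hαβ]
  by_cases hT1 : T + 1 = p
  · have hd : (α + T) / p - (β + (p - 1)) / p = (α - β) / p := by
      rw [← hT1]; push_cast; ring
    have hne : ((α - β : ℚ) : ℚ_[p]) ≠ 0 := Rat.cast_ne_zero.mpr (by linarith)
    have hpne : (p : ℚ_[p]) ≠ 0 := Nat.cast_ne_zero.mpr (Fact.out : p.Prime).ne_zero
    rw [if_pos (hiff.mpr hT1), hd, if_pos (sub_pos.mp (hd ▸ div_pos (by linarith) hp)),
      rplus_of_pos (by positivity)]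
    push_cast at hne ⊢
    field_simp
  · have hT2 : (T : ℚ) + 2 ≤ p := by exact_mod_cast (by omega : T + 2 ≤ p)
    have hlt : (α + T) / p < (β + (p - 1)) / p := div_lt_div_of_pos_right (by linarith) hp
    rw [if_neg (mt hiff.mp hT1), if_neg hlt.not_gt, rplus_of_nonpos (by linarith)]
    simp

theorem gamma_sub_sub_one_eq {α β α1 β1 : ℚ} (hα : 0 < α ∧ α < 1) (hβ : 0 < β ∧ β < 1)
    (hβ1 : ‖((β - 1 : ℚ) : ℚ_[p])‖ < 1) (hαd : IsDworkPrime p α α1)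
    (hβd : IsDworkPrime p β β1) :
    Γ ((α - (β - 1) : ℚ) : ℚ_[p]) =
      (if α < β then 1 else -1) * (if β1 < α1 then (p : ℚ_[p])⁻¹ else 1) *
        (((rplus (α - β) : ℚ) : ℚ_[p]) / ((rplus (α1 - β1) : ℚ) : ℚ_[p])) *
        Γ ((Int.fract (α - β) : ℚ) : ℚ_[p]) := by
  have hαβ : ‖((α - β : ℚ) : ℚ_[p])‖ ≤ 1 := by
    push_cast
    exact (norm_sub_le_max_norm _ _).trans (max_le hαd.norm_le_one hβd.norm_le_one)
  obtain ⟨T, hT, hTn, rfl⟩ := hαd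
  have hiff := norm_sub_lt_one_iff_add_one_eq hT (norm_lt_one_of_norm_div_le_one hTn) hβ1
  rw [hβd.eq_of_norm_sub_one_lt_one hβ1]
  rcases lt_trichotomy α β with hlt | rfl | hgt
  · have hT' : (T : ℚ) ≤ p - 1 := by
      rw [le_sub_iff_add_le]; exact_mod_cast hT
    have hle : (α + T) / p ≤ (β + (p - 1)) / p := by gcongr
    have hfract : Int.fract (α - β) = α - β + 1 := by
      rw [Int.fract_eq_iff]; exact ⟨by linarith, by linarith, -1, by norm_num⟩
    rw [if_pos hlt, if_neg hle.not_gt, rplus_of_nonpos (by linarith),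
      rplus_of_nonpos (by linarith), hfract, show α - (β - 1) = α - β + 1 by ring]
    simp
  · have hT1 : (T : ℚ) = p - 1 := by
      rw [eq_sub_iff_add_eq]; exact_mod_cast hiff.mp (by simp)
    rw [hT1, if_neg (lt_irrefl α), if_neg (lt_irrefl _), sub_self, sub_self,
      rplus_of_nonpos le_rfl]
    simpa using gamma_add_one hΓc hΓ (x := 0) (by simp)
  · rw [if_neg hgt.not_gt, Int.fract_eq_self.mpr ⟨by linarith, by linarith⟩,
      rplus_of_pos (by linarith)]
    exact gamma_sub_sub_one_eq_of_lt hΓc hΓ hT hgt (by linarith) hαβ hiff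

theorem prod_gamma_sub_sub_one_div_eq {n : ℕ} (a b a1 b1 : Fin n → ℚ)
    (ha : ∀ i, 0 < a i ∧ a i < 1) (hb : ∀ j, 0 < b j ∧ b j < 1)
    (hab : ∀ i j, ∀ t : ℤ, a i - b j ≠ (t : ℚ)) (hbdist : Function.Injective b)
    (ha1 : ∀ i, IsDworkPrime p (a i) (a1 i)) (hb1 : ∀ j, IsDworkPrime p (b j) (b1 j))
    (k : Fin n) (hk : ‖((b k - 1 : ℚ) : ℚ_[p])‖ ≤ (p : ℝ)⁻¹) :
    ∏ i, Γ ((b i - (b k - 1) : ℚ) : ℚ_[p]) / Γ ((a i - (b k - 1) : ℚ) : ℚ_[p]) =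
      p * gammaConst p Γ a b a1 b1 k := by
  have hpne : (p : ℚ_[p]) ≠ 0 := Nat.cast_ne_zero.mpr (Fact.out : p.Prime).ne_zero
  have hk1 : ‖((b k - 1 : ℚ) : ℚ_[p])‖ < 1 :=
    hk.trans_lt (inv_lt_one_of_one_lt₀ (by exact_mod_cast (Fact.out : p.Prime).one_lt))
  have ha1k : ∀ i, a1 i ≠ b1 k := fun i h => by
    obtain ⟨t, ht⟩ := (ha1 i).exists_sub_eq_intCast (hb1 k) h
    exact hab i k t ht
  have hb1inj : Function.Injective b1 := fun i j h => by
    obtain ⟨t, ht⟩ := (hb1 i).exists_sub_eq_intCast (hb1 j) h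
    exact hbdist (eq_of_sub_eq_intCast (hb i) (hb j) ht)
  calc ∏ i, Γ ((b i - (b k - 1) : ℚ) : ℚ_[p]) / Γ ((a i - (b k - 1) : ℚ) : ℚ_[p])
      = ∏ i, ((if b i < b k then (1 : ℚ_[p]) else -1) / (if a i < b k then 1 else -1) *
          ((if b1 k < b1 i then (p : ℚ_[p])⁻¹ else 1) /
            (if b1 k < a1 i then (p : ℚ_[p])⁻¹ else 1)) *
          (((rplus (b i - b k) : ℚ) : ℚ_[p]) / ((rplus (b1 i - b1 k) : ℚ) : ℚ_[p]) /
            (((rplus (a i - b k) : ℚ) : ℚ_[p]) / ((rplus (a1 i - b1 k) : ℚ) : ℚ_[p]))) *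
          (Γ ((Int.fract (b i - b k) : ℚ) : ℚ_[p]) /
            Γ ((Int.fract (a i - b k) : ℚ) : ℚ_[p]))) := by
        refine prod_congr rfl fun i _ => ?_
        rw [gamma_sub_sub_one_eq hΓc hΓ (hb i) (hb k) hk1 (hb1 i) (hb1 k),
          gamma_sub_sub_one_eq hΓc hΓ (ha i) (hb k) hk1 (ha1 i) (hb1 k)]
        ring
    _ = (-1) ^ Zfun a b (b k) * (p : ℚ_[p]) ^ (1 - Zfun a1 b1 (b1 k)) *
          (((Kfun a1 b1 (b1 k) : ℚ) : ℚ_[p]) / ((Kfun a b (b k) : ℚ) : ℚ_[p])) *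
          ∏ i, Γ ((Int.fract (b i - b k) : ℚ) : ℚ_[p]) /
            Γ ((Int.fract (a i - b k) : ℚ) : ℚ_[p]) := by
        rw [prod_mul_distrib, prod_mul_distrib, prod_mul_distrib, prod_sign_div_eq_neg_one_zpow,
          prod_ite_lt_div_eq_zpow _ hpne a1 b1 hb1inj k ha1k, prod_rplus_div_eq_Kfun_div]
    _ = p * gammaConst p Γ a b a1 b1 k := by
        rw [gammaConst, sub_eq_add_neg, zpow_add₀ hpne, zpow_one]
        ring

end PadicGamma

theorem stmt_8_general (p : ℕ) [Fact p.Prime] {n : ℕ}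
    (Γ : ℚ_[p] → ℚ_[p]) (hΓc : ContinuousOn Γ {x : ℚ_[p] | ‖x‖ ≤ 1})
    (hΓu : ∀ x : ℚ_[p], ‖x‖ ≤ 1 → ‖Γ x‖ = 1)
    (hΓ : ∀ m : ℕ, 0 < m →
      Γ (m : ℚ_[p]) = (-1 : ℚ_[p]) ^ m * ∏ k ∈ Finset.Ico 1 m, if p ∣ k then 1 else (k : ℚ_[p]))
    (a b a1 b1 : Fin n → ℚ)
    (ha : ∀ i, 0 < a i ∧ a i < 1) (hb : ∀ j, 0 < b j ∧ b j < 1)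
    (hab : ∀ i j, ∀ t : ℤ, a i - b j ≠ (t : ℚ))
    (hbdist : Function.Injective b)
    (ha1 : ∀ i, IsDworkPrime p (a i) (a1 i)) (hb1 : ∀ j, IsDworkPrime p (b j) (b1 j))
    (k l : Fin n)
    (hk : ‖((b k - 1 : ℚ) : ℚ_[p])‖ ≤ (p : ℝ)⁻¹)
    (hl : ‖((b l - 1 : ℚ) : ℚ_[p])‖ ≤ (p : ℝ)⁻¹) :
    gammaConst p Γ a b a1 b1 l ≠ 0 ∧
      gammaConst p Γ a b a1 b1 k / gammaConst p Γ a b a1 b1 l =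
        ∏ i,
          (Γ ((b i - (b k - 1) : ℚ) : ℚ_[p]) / Γ ((a i - (b k - 1) : ℚ) : ℚ_[p])) *
            (Γ ((a i - (b l - 1) : ℚ) : ℚ_[p]) / Γ ((b i - (b l - 1) : ℚ) : ℚ_[p])) := by
  have hpne : (p : ℚ_[p]) ≠ 0 := Nat.cast_ne_zero.mpr (Fact.out : p.Prime).ne_zero
  have hprod := prod_gamma_sub_sub_one_div_eq hΓc hΓ a b a1 b1 ha hb hab hbdist ha1 hb1
  have hl1 : ‖((b l - 1 : ℚ) : ℚ_[p])‖ ≤ 1 :=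
    hl.trans (inv_le_one_of_one_le₀ (by exact_mod_cast (Fact.out : p.Prime).one_le))
  have hΓne : ∀ {α α1 : ℚ}, IsDworkPrime p α α1 → Γ ((α - (b l - 1) : ℚ) : ℚ_[p]) ≠ 0 := by
    intro α _ hαd h
    have hx : ‖((α - (b l - 1) : ℚ) : ℚ_[p])‖ ≤ 1 := by
      rw [Rat.cast_sub]
      exact (norm_sub_le_max_norm _ _).trans (max_le hαd.norm_le_one hl1)
    have hΓ1 := hΓu _ hx
    rw [h, norm_zero] at hΓ1
    exact zero_ne_one hΓ1
  have hl_ne :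
      ∏ i, Γ ((b i - (b l - 1) : ℚ) : ℚ_[p]) / Γ ((a i - (b l - 1) : ℚ) : ℚ_[p]) ≠ 0 :=
    prod_ne_zero_iff.mpr fun i _ => div_ne_zero (hΓne (hb1 i)) (hΓne (ha1 i))
  refine ⟨fun h => hl_ne (by rw [hprod l hl, h, mul_zero]), ?_⟩
  rw [← mul_div_mul_left _ _ hpne, ← hprod k hk, ← hprod l hl, ← prod_div_distrib]
  exact prod_congr rfl fun i _ => by rw [div_div_eq_mul_div, mul_div_assoc]

/-- **Corollary:** if `b_k ≡ b_l ≡ 1 (mod p)` then, with `ε_k = b_k - 1`, `ε_l = b_l - 1`,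
`γ_k/γ_l = ∏ᵢ (Γ_p(bᵢ-ε_k)/Γ_p(aᵢ-ε_k)) (Γ_p(aᵢ-ε_l)/Γ_p(bᵢ-ε_l))`, and `γ_l ≠ 0`. -/
theorem stmt_8 (p : ℕ) [Fact p.Prime] {n : ℕ}
    (Γ : ℚ_[p] → ℚ_[p]) (hΓc : ContinuousOn Γ {x : ℚ_[p] | ‖x‖ ≤ 1})
    (hΓu : ∀ x : ℚ_[p], ‖x‖ ≤ 1 → ‖Γ x‖ = 1)
    (hΓ : ∀ m : ℕ, 0 < m →
      Γ (m : ℚ_[p]) = (-1 : ℚ_[p]) ^ m * ∏ k ∈ Finset.Ico 1 m, if p ∣ k then 1 else (k : ℚ_[p]))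
    (a b a1 b1 : Fin n → ℚ)
    (haZ : ∀ i, ‖((a i : ℚ) : ℚ_[p])‖ ≤ 1) (hbZ : ∀ j, ‖((b j : ℚ) : ℚ_[p])‖ ≤ 1)
    (ha : ∀ i, 0 < a i ∧ a i < 1) (hb : ∀ j, 0 < b j ∧ b j < 1)
    (hab : ∀ i j, ∀ t : ℤ, a i - b j ≠ (t : ℚ))
    (hbdist : Function.Injective b)
    (ha1 : ∀ i, IsDworkPrime p (a i) (a1 i)) (hb1 : ∀ j, IsDworkPrime p (b j) (b1 j))
    (k l : Fin n)
    (hk : ‖((b k - 1 : ℚ) : ℚ_[p])‖ ≤ (p : ℝ)⁻¹)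
    (hl : ‖((b l - 1 : ℚ) : ℚ_[p])‖ ≤ (p : ℝ)⁻¹) :
    gammaConst p Γ a b a1 b1 l ≠ 0 ∧
      gammaConst p Γ a b a1 b1 k / gammaConst p Γ a b a1 b1 l =
        ∏ i,
          (Γ ((b i - (b k - 1) : ℚ) : ℚ_[p]) / Γ ((a i - (b k - 1) : ℚ) : ℚ_[p])) *
            (Γ ((a i - (b l - 1) : ℚ) : ℚ_[p]) / Γ ((b i - (b l - 1) : ℚ) : ℚ_[p])) :=
  stmt_8_general p Γ hΓc hΓu hΓ a b a1 b1 ha hb hab hbdist ha1 hb1 k l hk hl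
end
end
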